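/- arXiv:1109.0115 — 4 statements merged into one kernel-verified Lean document; each statement's English description precedes it below -/
import Mathlib

section
/- Let A be a finite set of elements of a type α, B a finite set of elements of a type β, and R : α → β → Prop a relation, and let l₁, u₁, l₂, u₂ be natural numbers with l₂ ≥ 1 and u₂ ≥ 1. Suppose for every a ∈ A the number of b ∈ B with R a b lies in [l₁, u₁], and for every b ∈ B the number of a ∈ A with R a b lies in [l₂, u₂]. Then ⌈(l₁ · |A|) / u₂⌉ ≤ |B| ≤ ⌊(u₁ · |A|) / l₂⌋, where ⌈·⌉ and ⌊·⌋ denote the ceiling and floor of the rational quotients. -/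
/-!
Double count the pairs `(a, b) ∈ A × B` with `R a b`: summing over `A` puts their number between
`l₁ |A|` and `u₁ |A|`, summing over `B` puts it between `l₂ |B|` and `u₂ |B|`. Hence
`l₁ |A| ≤ u₂ |B|` and `l₂ |B| ≤ u₁ |A|`, and the bounds follow by dividing.
-/

namespace Int

variable {K : Type*} [Field K] [LinearOrder K] [IsStrictOrderedRing K] [FloorRing K]

/-- Also true for `d = 0`, where `(n : K) / 0 = 0`. -/
theorem ceil_natCast_div_le_of_le_mul {n d k : ℕ} (h : n ≤ k * d) : ⌈(n : K) / d⌉ ≤ k := by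
  rw [ceil_le, cast_natCast]
  exact div_le_of_le_mul₀ d.cast_nonneg k.cast_nonneg (by exact_mod_cast h)

theorem le_floor_natCast_div_of_mul_le {n d k : ℕ} (hd : 0 < d) (h : k * d ≤ n) :
    (k : ℤ) ≤ ⌊(n : K) / d⌋ := by
  rw [le_floor, cast_natCast, le_div_iff₀ (by exact_mod_cast hd)]
  exact_mod_cast h

end Int

open Classical in
theorem generated_bounds_general {α β : Type*} (A : Finset α) (B : Finset β)
    (R : α → β → Prop) (l₁ u₁ l₂ u₂ : ℕ) (hl₂ : 1 ≤ l₂)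
    (hA : ∀ a ∈ A, l₁ ≤ (B.filter (fun b => R a b)).card ∧
        (B.filter (fun b => R a b)).card ≤ u₁)
    (hB : ∀ b ∈ B, l₂ ≤ (A.filter (fun a => R a b)).card ∧
        (A.filter (fun a => R a b)).card ≤ u₂) :
    ⌈((l₁ * A.card : ℕ) : ℚ) / (u₂ : ℚ)⌉ ≤ (B.card : ℤ) ∧
    (B.card : ℤ) ≤ ⌊((u₁ * A.card : ℕ) : ℚ) / (l₂ : ℚ)⌋ := by
  have lower : A.card * l₁ ≤ B.card * u₂ :=
    Finset.card_mul_le_card_mul R (fun a ha => (hA a ha).1) (fun b hb => (hB b hb).2)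
  have upper : B.card * l₂ ≤ A.card * u₁ :=
    Finset.card_mul_le_card_mul' R (fun b hb => (hB b hb).1) (fun a ha => (hA a ha).2)
  exact ⟨Int.ceil_natCast_div_le_of_le_mul (by linarith),
    Int.le_floor_natCast_div_of_mul_le hl₂ (by linarith)⟩

open Classical in
/-- Bounds on the number of generated components `|B|` from the known
number of input components `|A|` and the connection cardinalities:
`⌈l₁·|A| / u₂⌉ ≤ |B| ≤ ⌊u₁·|A| / l₂⌋`. -/
theorem generated_bounds {α β : Type*} (A : Finset α) (B : Finset β)
    (R : α → β → Prop) (l₁ u₁ l₂ u₂ : ℕ) (hl₂ : 1 ≤ l₂) (hu₂ : 1 ≤ u₂)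
    (hA : ∀ a ∈ A, l₁ ≤ (B.filter (fun b => R a b)).card ∧
        (B.filter (fun b => R a b)).card ≤ u₁)
    (hB : ∀ b ∈ B, l₂ ≤ (A.filter (fun a => R a b)).card ∧
        (A.filter (fun a => R a b)).card ≤ u₂) :
    ⌈((l₁ * A.card : ℕ) : ℚ) / (u₂ : ℚ)⌉ ≤ (B.card : ℤ) ∧
    (B.card : ℤ) ≤ ⌊((u₁ * A.card : ℕ) : ℚ) / (l₂ : ℚ)⌋ :=
  generated_bounds_general A B R l₁ u₁ l₂ u₂ hl₂ hA hB
end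

section
/- Let A be a finite set of elements of a type α, B a finite set of elements of a type β, and R : α → β → Prop a relation, and let a₁, a₂, l₁, u₁, l₂, u₂ be natural numbers with l₂ ≥ 1 and u₂ ≥ 1. Suppose a₁ ≤ |A| ≤ a₂, for every a ∈ A the number of b ∈ B with R a b lies in [l₁, u₁], and for every b ∈ B the number of a ∈ A with R a b lies in [l₂, u₂]. Then ⌈(l₁ · a₁) / u₂⌉ ≤ |B| ≤ ⌊(u₁ · a₂) / l₂⌋, where ⌈·⌉ and ⌊·⌋ denote the ceiling and floor of the rational quotients. -/
open Classical in
theorem generated_bounds_interval_general {α β : Type*} (A : Finset α) (B : Finset β)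
    (R : α → β → Prop) (a₁ a₂ l₁ u₁ l₂ u₂ : ℕ) (hl₂ : 1 ≤ l₂)
    (ha : a₁ ≤ A.card ∧ A.card ≤ a₂)
    (hA : ∀ a ∈ A, l₁ ≤ (B.filter (fun b => R a b)).card ∧
        (B.filter (fun b => R a b)).card ≤ u₁)
    (hB : ∀ b ∈ B, l₂ ≤ (A.filter (fun a => R a b)).card ∧
        (A.filter (fun a => R a b)).card ≤ u₂) :
    ⌈((l₁ * a₁ : ℕ) : ℚ) / (u₂ : ℚ)⌉ ≤ (B.card : ℤ) ∧
    (B.card : ℤ) ≤ ⌊((u₁ * a₂ : ℕ) : ℚ) / (l₂ : ℚ)⌋ := by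
  have lower : l₁ * a₁ ≤ B.card * u₂ :=
    calc l₁ * a₁ ≤ A.card * l₁ := by rw [mul_comm]; exact Nat.mul_le_mul_right l₁ ha.1
      _ ≤ B.card * u₂ :=
        Finset.card_mul_le_card_mul R (fun a h => (hA a h).1) (fun b h => (hB b h).2)
  have upper : B.card * l₂ ≤ u₁ * a₂ :=
    calc B.card * l₂ ≤ A.card * u₁ :=
          Finset.card_mul_le_card_mul' R (fun b h => (hB b h).1) (fun a h => (hA a h).2)
      _ ≤ u₁ * a₂ := by rw [mul_comm]; exact Nat.mul_le_mul_left u₁ ha.2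
  constructor
  · -- this also covers `u₂ = 0`, where the quotient is the junk value `x / 0 = 0`
    rw [Int.ceil_le]
    exact div_le_of_le_mul₀ (by positivity) (by positivity) (by exact_mod_cast lower)
  · rw [Int.le_floor, le_div_iff₀ (by exact_mod_cast hl₂)]
    exact_mod_cast upper

open Classical in
/-- Bounds on `|B|` when only an interval `[a₁, a₂]` of possible sizes of the
generated component kind `A` is known:
`⌈l₁·a₁ / u₂⌉ ≤ |B| ≤ ⌊u₁·a₂ / l₂⌋`. -/
theorem generated_bounds_interval {α β : Type*} (A : Finset α) (B : Finset β)
    (R : α → β → Prop) (a₁ a₂ l₁ u₁ l₂ u₂ : ℕ) (hl₂ : 1 ≤ l₂) (hu₂ : 1 ≤ u₂)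
    (ha : a₁ ≤ A.card ∧ A.card ≤ a₂)
    (hA : ∀ a ∈ A, l₁ ≤ (B.filter (fun b => R a b)).card ∧
        (B.filter (fun b => R a b)).card ≤ u₁)
    (hB : ∀ b ∈ B, l₂ ≤ (A.filter (fun a => R a b)).card ∧
        (A.filter (fun a => R a b)).card ≤ u₂) :
    ⌈((l₁ * a₁ : ℕ) : ℚ) / (u₂ : ℚ)⌉ ≤ (B.card : ℤ) ∧
    (B.card : ℤ) ≤ ⌊((u₁ * a₂ : ℕ) : ℚ) / (l₂ : ℚ)⌋ :=
  generated_bounds_interval_general A B R a₁ a₂ l₁ u₁ l₂ u₂ hl₂ ha hA hB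
end

section
/- Let K be a type of kinds, U a type, S : K → Set U a family of sets, and level : K → ℕ a level mapping. Suppose (1) for every kind k with level k = 0 the set S k is finite, and (2) for every kind k with level k > 0 there exist a kind k' with level k' < level k, a relation R : U → U → Prop, and a natural number u such that every b ∈ S k has some a ∈ S k' with R a b, and for every a ∈ S k' the set {b ∈ S k | R a b} is finite with cardinality at most u. Then S k is finite for every kind k. -/
theorem Set.Finite.of_forall_exists_rel {α β : Type*} {s : Set α} {t : Set β}
    (hs : s.Finite) (R : α → β → Prop) (hcover : ∀ b ∈ t, ∃ a ∈ s, R a b)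
    (hfiber : ∀ a ∈ s, {b ∈ t | R a b}.Finite) : t.Finite :=
  (hs.biUnion hfiber).subset fun b hb =>
    (hcover b hb).elim fun _ ⟨ha, hab⟩ => Set.mem_biUnion ha ⟨hb, hab⟩

/-- LoCo finite model property: if level-zero kinds are finite and every kind
of positive level is grounded in a kind of strictly smaller level via a
connection with a finite per-component upper bound, then all kinds are finite. -/
theorem level_mapping_finite {K U : Type*} (S : K → Set U) (level : K → ℕ)
    (h0 : ∀ k, level k = 0 → (S k).Finite)
    (hstep : ∀ k, 0 < level k →
      ∃ k', level k' < level k ∧ ∃ R : U → U → Prop, ∃ u : ℕ,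
        (∀ b ∈ S k, ∃ a ∈ S k', R a b) ∧
        (∀ a ∈ S k', {b ∈ S k | R a b}.Finite ∧ {b ∈ S k | R a b}.ncard ≤ u)) :
    ∀ k, (S k).Finite := by
  intro k
  induction k using (measure level).wf.induction with | _ k ih
  rcases (level k).eq_zero_or_pos with hk | hk
  · exact h0 k hk
  obtain ⟨k', hlt, R, _, hcover, hfiber⟩ := hstep k hk
  exact (ih k' hlt).of_forall_exists_rel R hcover fun a ha => (hfiber a ha).1
end

section
/- Let ι be a finite index type, C a finite set of elements of a type α, and for each i : ι let Dᵢ be a finite set of elements of a type β with the sets Dᵢ pairwise disjoint, and let Rᵢ : α → β → Prop be relations. Let l, u and, for each i, lᵢ, uᵢ be natural numbers with l ≥ 1 and u ≥ 1. Suppose for every c ∈ C the total number Σᵢ |{x ∈ Dᵢ | Rᵢ c x}| lies in [l, u], and for every i and every x ∈ Dᵢ the number of c ∈ C with Rᵢ c x lies in [lᵢ, uᵢ]. Then ⌈(Σᵢ lᵢ · |Dᵢ|) / u⌉ ≤ |C| ≤ ⌊(Σᵢ uᵢ · |Dᵢ|) / l⌋, where ⌈·⌉ and ⌊·⌋ denote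 the ceiling and floor of the rational quotients. -/
/-!
Double counting the incidences `(c, (i, x))` with `c ∈ C`, `x ∈ Dᵢ` and `Rᵢ c x`: counted from
the side of `C` their number lies between `l·|C|` and `u·|C|`, counted from the side of the
`Dᵢ` it lies between `Σᵢ lᵢ·|Dᵢ|` and `Σᵢ uᵢ·|Dᵢ|`. The elements of the kinds are taken
as pairs `(i, x)` in the sigma type `Σ i, Dᵢ`.
-/

open Finset

namespace Finset

section DoubleCounting

variable {α β : Type*} {r : α → β → Prop} [∀ a b, Decidable (r a b)] {s : Finset α}
  {t : Finset β}

theorem card_mul_le_sum_of_card_bipartiteBelow_le {m : ℕ} {f : β → ℕ}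
    (hs : ∀ a ∈ s, m ≤ #(t.bipartiteAbove r a))
    (ht : ∀ b ∈ t, #(s.bipartiteBelow r b) ≤ f b) :
    #s * m ≤ ∑ b ∈ t, f b :=
  calc #s * m = ∑ _a ∈ s, m := by rw [sum_const, smul_eq_mul]
    _ ≤ ∑ a ∈ s, #(t.bipartiteAbove r a) := sum_le_sum hs
    _ = ∑ b ∈ t, #(s.bipartiteBelow r b) := sum_card_bipartiteAbove_eq_sum_card_bipartiteBelow r
    _ ≤ ∑ b ∈ t, f b := sum_le_sum ht

theorem sum_le_card_mul_of_le_card_bipartiteBelow {n : ℕ} {f : β → ℕ}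
    (ht : ∀ b ∈ t, f b ≤ #(s.bipartiteBelow r b))
    (hs : ∀ a ∈ s, #(t.bipartiteAbove r a) ≤ n) :
    ∑ b ∈ t, f b ≤ #s * n :=
  calc ∑ b ∈ t, f b ≤ ∑ b ∈ t, #(s.bipartiteBelow r b) := sum_le_sum ht
    _ = ∑ a ∈ s, #(t.bipartiteAbove r a) :=
      (sum_card_bipartiteAbove_eq_sum_card_bipartiteBelow r).symm
    _ ≤ ∑ _a ∈ s, n := sum_le_sum hs
    _ = #s * n := by rw [sum_const, smul_eq_mul]

end DoubleCounting

section Sigma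

variable {ι β : Type*} [Fintype ι] {D : ι → Finset β}

theorem card_filter_univ_sigma (p : (i : ι) → β → Prop) [∀ i x, Decidable (p i x)] :
    #((univ.sigma D).filter fun y => p y.1 y.2) = ∑ i, #((D i).filter (p i)) := by
  simp only [card_filter, sum_sigma]

theorem sum_univ_sigma_fst (f : ι → ℕ) :
    ∑ y ∈ univ.sigma D, f y.1 = ∑ i, f i * #(D i) := by
  simp only [sum_sigma, sum_const, smul_eq_mul, mul_comm]

end Sigma

end Finset

open Classical in
theorem one_to_many_bounds_general {ι α β : Type*} [Fintype ι] (C : Finset α)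
    (D : ι → Finset β)
    (R : ι → α → β → Prop) (l u : ℕ) (lo hi : ι → ℕ)
    (hl : 1 ≤ l)
    (hC : ∀ c ∈ C, l ≤ ∑ i, ((D i).filter (fun x => R i c x)).card ∧
        ∑ i, ((D i).filter (fun x => R i c x)).card ≤ u)
    (hD : ∀ i, ∀ x ∈ D i, lo i ≤ (C.filter (fun c => R i c x)).card ∧
        (C.filter (fun c => R i c x)).card ≤ hi i) :
    ⌈((∑ i, lo i * (D i).card : ℕ) : ℚ) / (u : ℚ)⌉ ≤ (C.card : ℤ) ∧
    (C.card : ℤ) ≤ ⌊((∑ i, hi i * (D i).card : ℕ) : ℚ) / (l : ℚ)⌋ := by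
  let r : α → (Σ _ : ι, β) → Prop := fun c y => R y.1 c y.2
  have hAbove (c : α) : #((univ.sigma D).bipartiteAbove r c) = ∑ i, #((D i).filter (R i c)) :=
    card_filter_univ_sigma fun i x => R i c x
  have hlower : ∑ i, lo i * #(D i) ≤ #C * u := by
    rw [← sum_univ_sigma_fst]
    refine sum_le_card_mul_of_le_card_bipartiteBelow (r := r) ?_ fun c hc => ?_
    · rintro ⟨i, x⟩ hx
      exact (hD i x (mem_sigma.1 hx).2).1
    · exact hAbove c ▸ (hC c hc).2
  have hupper : #C * l ≤ ∑ i, hi i * #(D i) := by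
    rw [← sum_univ_sigma_fst]
    refine card_mul_le_sum_of_card_bipartiteBelow_le (r := r) (fun c hc => ?_) ?_
    · exact hAbove c ▸ (hC c hc).1
    · rintro ⟨i, x⟩ hx
      exact (hD i x (mem_sigma.1 hx).2).2
  constructor
  · rw [Int.ceil_le]
    exact div_le_of_le_mul₀ (Nat.cast_nonneg _) (Nat.cast_nonneg _) (by exact_mod_cast hlower)
  · rw [Int.le_floor, le_div_iff₀ (by exact_mod_cast hl)]
    exact_mod_cast hupper

open Classical in
/-- Bounds on `|C|` from a one-to-many connection to pairwise disjoint kinds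
`Dᵢ` combined with binary connections back to `C`:
`⌈(Σᵢ lᵢ·|Dᵢ|) / u⌉ ≤ |C| ≤ ⌊(Σᵢ uᵢ·|Dᵢ|) / l⌋`. -/
theorem one_to_many_bounds {ι α β : Type*} [Fintype ι] (C : Finset α)
    (D : ι → Finset β) (hdisj : Pairwise fun i j => Disjoint (D i) (D j))
    (R : ι → α → β → Prop) (l u : ℕ) (lo hi : ι → ℕ)
    (hl : 1 ≤ l) (hu : 1 ≤ u)
    (hC : ∀ c ∈ C, l ≤ ∑ i, ((D i).filter (fun x => R i c x)).card ∧
        ∑ i, ((D i).filter (fun x => R i c x)).card ≤ u)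
    (hD : ∀ i, ∀ x ∈ D i, lo i ≤ (C.filter (fun c => R i c x)).card ∧
        (C.filter (fun c => R i c x)).card ≤ hi i) :
    ⌈((∑ i, lo i * (D i).card : ℕ) : ℚ) / (u : ℚ)⌉ ≤ (C.card : ℤ) ∧
    (C.card : ℤ) ≤ ⌊((∑ i, hi i * (D i).card : ℕ) : ℚ) / (l : ℚ)⌋ :=
  one_to_many_bounds_general C D R l u lo hi hl hC hD
end
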